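/- arXiv:2308.11176 — 3 statements merged into one kernel-verified Lean document; each statement's English description precedes it below -/
import Mathlib

section
/- If σ is an m-coloring of an m-network N satisfying conditions (C1) and (C2), then the restriction of σ to the set of roots of N is injective (no two roots receive the same color); since σ is surjective onto m colors and there are m roots, σ restricted to the roots is a bijection onto the color set. -/
open Finset

namespace FB

/-- A finite directed graph given by its arc set. -/
structure Net (V : Type) where
  arcs : Finset (V × V)

namespace Net

variable {V : Type} [Fintype V] [DecidableEq V]

/-- `(u,v)` is an arc. -/
def Arc (N : Net V) (u v : V) : Prop := (u, v) ∈ N.arcs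

/-- Parents of a vertex. -/
def parents (N : Net V) (v : V) : Finset V := univ.filter (fun u => (u, v) ∈ N.arcs)

/-- Children of a vertex. -/
def children (N : Net V) (v : V) : Finset V := univ.filter (fun u => (v, u) ∈ N.arcs)

def inDeg (N : Net V) (v : V) : ℕ := (N.parents v).card
def outDeg (N : Net V) (v : V) : ℕ := (N.children v).card

def IsRoot (N : Net V) (v : V) : Prop := N.inDeg v = 0
def IsLeaf (N : Net V) (v : V) : Prop := N.outDeg v = 0
def IsRetic (N : Net V) (v : V) : Prop := 2 ≤ N.inDeg v
def IsTreeVertex (N : Net V) (v : V) : Prop := ¬ N.IsLeaf v ∧ N.inDeg v ≤ 1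

instance (N : Net V) : DecidablePred N.IsRoot := fun v => decidable_of_iff (N.inDeg v = 0) Iff.rfl
instance (N : Net V) : DecidablePred N.IsLeaf := fun v => decidable_of_iff (N.outDeg v = 0) Iff.rfl
instance (N : Net V) : DecidablePred N.IsRetic := fun v => decidable_of_iff (2 ≤ N.inDeg v) Iff.rfl

def roots (N : Net V) : Finset V := univ.filter (fun v => N.IsRoot v)
def leaves (N : Net V) : Finset V := univ.filter (fun v => N.IsLeaf v)

/-- Directed-acyclicity. -/
def Acyclic (N : Net V) : Prop := ∀ v, ¬ Relation.TransGen N.Arc v v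

/-- Weak (undirected) connectivity. -/
def Connected (N : Net V) : Prop :=
  ∀ u v : V, Relation.ReflTransGen (fun a b => N.Arc a b ∨ N.Arc b a) u v

/-- `N` is a network: a connected DAG in which leaves (sinks) have indegree 1,
roots (sources) have outdegree ≥ 2, reticulations have outdegree 1, and
no vertex has both indegree 1 and outdegree 1. -/
def IsNetwork (N : Net V) : Prop :=
  N.Acyclic ∧ N.Connected ∧
  (∀ v, N.IsLeaf v → N.inDeg v = 1) ∧
  (∀ v, N.IsRoot v → 2 ≤ N.outDeg v) ∧
  (∀ v, N.IsRetic v → N.outDeg v = 1) ∧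
  (∀ v, ¬ (N.inDeg v = 1 ∧ N.outDeg v = 1))

/-- An `m`-network: a network with exactly `m` roots. -/
def IsMNetwork (N : Net V) (m : ℕ) : Prop := N.IsNetwork ∧ N.roots.card = m

/-- `u` and `v` are in the same connected component (tree) of `N`. -/
def SameTree (N : Net V) (u v : V) : Prop :=
  Relation.ReflTransGen (fun a b => N.Arc a b ∨ N.Arc b a) u v

/-- `A'` spans a subdivision forest of `N`: a spanning subgraph in which every
vertex has indegree ≤ 1, with the same leaf set as `N`, and such that every
arc of `N` outside `A'` has its two endpoints in different trees. -/
def IsSubdivisionForest (N : Net V) (A' : Finset (V × V)) : Prop :=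
  A' ⊆ N.arcs ∧
  (∀ v, (Net.mk A' : Net V).inDeg v ≤ 1) ∧
  (∀ v, (Net.mk A' : Net V).IsLeaf v ↔ N.IsLeaf v) ∧
  (∀ a ∈ N.arcs, a ∉ A' → ¬ (Net.mk A' : Net V).SameTree a.1 a.2)

/-- `N` is proper forest-based: it has a subdivision forest with exactly `m`
trees (equivalently, `m` sources, as each tree of the forest has a unique source). -/
def ProperForestBased (N : Net V) (m : ℕ) : Prop :=
  ∃ A' : Finset (V × V), N.IsSubdivisionForest A' ∧ (Net.mk A' : Net V).roots.card = m

/-- (C1): every non-root vertex has exactly one parent of the same color. -/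
def C1 {C : Type} (N : Net V) (σ : V → C) : Prop :=
  ∀ v, ¬ N.IsRoot v → ∃! u, u ∈ N.parents v ∧ σ u = σ v

/-- (C2): every internal (non-leaf) vertex has at least one child of the same color. -/
def C2 {C : Type} (N : Net V) (σ : V → C) : Prop :=
  ∀ v, ¬ N.IsLeaf v → ∃ u ∈ N.children v, σ u = σ v

def Binary (N : Net V) : Prop :=
  (∀ v, N.inDeg v ≤ 2 ∧ N.outDeg v ≤ 2) ∧
  (∀ v, ¬ N.IsRoot v → N.inDeg v + N.outDeg v = 1 ∨ N.inDeg v + N.outDeg v = 3)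

def SemiBinary (N : Net V) : Prop := ∀ v, N.IsRetic v → N.inDeg v = 2

def QuasiBinary (N : Net V) : Prop :=
  (∀ v, N.IsTreeVertex v → N.outDeg v = 2) ∧
  (∀ v, N.IsRetic v → N.inDeg v = 2 ∨ N.inDeg v = 3)

def TreeChild (N : Net V) : Prop :=
  ∀ v, ¬ N.IsLeaf v → ∃ u ∈ N.children v, N.inDeg u ≤ 1

/-- An omnian: an internal vertex all of whose children are reticulations. -/
def Omnian (N : Net V) (v : V) : Prop := ¬ N.IsLeaf v ∧ ∀ u ∈ N.children v, N.IsRetic u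

instance (N : Net V) : DecidablePred N.Omnian :=
  fun v => decidable_of_iff (¬ N.IsLeaf v ∧ ∀ u ∈ N.children v, N.IsRetic u) Iff.rfl

/-- `GammaRel N g u` holds iff `g = γ_N(u)`: `g` has indegree ≠ 1 and there is a
directed path from `g` to `u` all of whose vertices after `g` have indegree 1. -/
def GammaRel (N : Net V) (g u : V) : Prop :=
  N.inDeg g ≠ 1 ∧ Relation.ReflTransGen (fun a b => N.Arc a b ∧ N.inDeg b = 1) g u

/-- The graph `Γ(N)`: vertices of indegree ≠ 1, with `v₁ ~ v₂` whenever there are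
distinct `u₁, u₂` with `γ_N(u₁) = v₁`, `γ_N(u₂) = v₂` sharing a child in `N`. -/
def gammaGraph (N : Net V) : SimpleGraph V where
  Adj v₁ v₂ := v₁ ≠ v₂ ∧ ∃ u₁ u₂, u₁ ≠ u₂ ∧ N.GammaRel v₁ u₁ ∧ N.GammaRel v₂ u₂ ∧
      ∃ c, N.Arc u₁ c ∧ N.Arc u₂ c
  symm := ⟨by
    rintro a b ⟨hne, u₁, u₂, h12, h1, h2, c, hc1, hc2⟩
    exact ⟨hne.symm, u₂, u₁, h12.symm, h2, h1, c, hc2, hc1⟩⟩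
  loopless := ⟨by rintro a ⟨hne, -⟩; exact hne rfl⟩

/-- An omni-extension of `Γ(N)`: a supergraph of `Γ(N)` on the same vertex set such
that for every omnian `v` there is a child `h` of `v` whose other parent `u`
satisfies that `{h, γ_N(u)}` is an edge. -/
def OmniExtension (N : Net V) (G : SimpleGraph V) : Prop :=
  N.gammaGraph ≤ G ∧
  ∀ v, N.Omnian v → ∃ h ∈ N.children v, ∃ u ∈ N.parents h, u ≠ v ∧
    ∃ g, N.GammaRel g u ∧ G.Adj h g

/-- A minimal omni-extension: no proper subgraph on the same vertex set is an
omni-extension. -/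
def MinOmniExtension (N : Net V) (G : SimpleGraph V) : Prop :=
  N.OmniExtension G ∧ ∀ G' : SimpleGraph V, G' ≤ G → N.OmniExtension G' → G' = G

/-- (F1): the coloring restricted to the roots is a bijection onto the colors. -/
def F1 {m : ℕ} (N : Net V) (σ : V → Fin m) : Prop :=
  Set.InjOn σ ↑N.roots ∧ ∀ c : Fin m, ∃ ρ ∈ N.roots, σ ρ = c

/-- (F2): for every root `u` and reticulation `v` of the same color, there is a
directed path from `u` to `v` on which every reticulation has that color. -/
def F2 {m : ℕ} (N : Net V) (σ : V → Fin m) : Prop :=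
  ∀ u, N.IsRoot u → ∀ v, N.IsRetic v → σ u = σ v →
    Relation.ReflTransGen (fun a b => N.Arc a b ∧ (N.IsRetic b → σ b = σ u)) u v

/-- The resolution operation at a reticulation `v` with chosen parent `p` and
unique child `c`: new vertices `v₁ = Sum.inr 0`, `v₂ = Sum.inr 1`, `x_v = Sum.inr 2`;
arcs `(p,v)` and `(v,c)` are removed and arcs `(v,v₁)`, `(v₁,v₂)`, `(v₂,c)`,
`(v₁,x_v)`, `(p,v₂)` are added. -/
def resolve (N : Net V) (p v c : V) : Net (V ⊕ Fin 3) :=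
  ⟨((N.arcs.erase (p, v)).erase (v, c)).image (fun a => (Sum.inl a.1, Sum.inl a.2)) ∪
    {(Sum.inl v, Sum.inr 0), (Sum.inr 0, Sum.inr 1), (Sum.inr 1, Sum.inl c),
     (Sum.inr 0, Sum.inr 2), (Sum.inl p, Sum.inr 1)}⟩

end Net

/-- Isomorphism of arc-sets under a bijection of vertices. -/
def NetIso {V W : Type} (N : Net V) (M : Net W) : Prop :=
  ∃ e : V ≃ W, ∀ u v : V, (u, v) ∈ N.arcs ↔ (e u, e v) ∈ M.arcs

end FB

open FB FB.Net in
/-- If σ is an m-coloring of an m-network satisfying (C1) and (C2),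
then σ is injective on the roots, and every color is attained by a root. -/
theorem stmt1 {V : Type} [Fintype V] [DecidableEq V] (N : Net V) (m : ℕ)
    (hN : N.IsMNetwork m) (σ : V → Fin m) (hsurj : Function.Surjective σ)
    (h1 : N.C1 σ) (h2 : N.C2 σ) :
    Set.InjOn σ ↑N.roots ∧ ∀ c : Fin m, ∃ ρ ∈ N.roots, σ ρ = c := by
  obtain ⟨⟨hacyc, -⟩, hcard⟩ := hN
  have wf : WellFounded N.Arc := by
    have hirr : IsIrrefl V (Relation.TransGen N.Arc) := ⟨hacyc⟩
    have htr : IsTrans V (Relation.TransGen N.Arc) := inferInstance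
    exact Subrelation.wf (fun h => Relation.TransGen.single h)
      (Finite.wellFounded_of_trans_of_irrefl _)
  have key : ∀ v : V, ∃ ρ ∈ N.roots, σ ρ = σ v := by
    intro v
    induction v using WellFounded.induction wf with
    | _ v ih =>
      by_cases hr : N.IsRoot v
      · exact ⟨v, by simp [Net.roots, hr], rfl⟩
      · obtain ⟨u, ⟨hu, hcol⟩, -⟩ := h1 v hr
        have harc : N.Arc u v := (Finset.mem_filter.mp hu).2
        obtain ⟨ρ, hρ, hρc⟩ := ih u harc
        exact ⟨ρ, hρ, hρc.trans hcol⟩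
  have hsurjroots : ∀ c : Fin m, ∃ ρ ∈ N.roots, σ ρ = c := by
    intro c
    obtain ⟨v, rfl⟩ := hsurj c
    exact key v
  refine ⟨?_, hsurjroots⟩
  have himg : N.roots.image σ = Finset.univ := by
    apply Finset.eq_univ_of_forall
    intro c
    obtain ⟨ρ, hρ, hc⟩ := hsurjroots c
    exact Finset.mem_image.mpr ⟨ρ, hρ, hc⟩
  have : (N.roots.image σ).card = N.roots.card := by
    rw [himg, Finset.card_univ, Fintype.card_fin, hcard]
  exact Finset.card_image_iff.mp this
end

section
/- Let N be an m-network (m ≥ 2) with an m-coloring σ satisfying (C1) and (C2), and let v be a reticulation of indegree ≥ 3 with unique child c. If p is a parent of v with σ(p) ≠ σ(v), then the coloring σ' of the resolved network N' (obtained by inserting v1, v2, x_v as in the resolution operation) defined by σ'(w) = σ(v) for w ∈ {v1, v2, x_v} and σ'(w) = σ(w) otherwise, satisfies both (C1) and (C2) on N'. -/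
open Finset

open FB FB.Net in
/-- Let σ be an m-coloring of an m-network N satisfying (C1),(C2),
v a reticulation of indegree ≥ 3 with unique child c, and p a parent of v with
σ p ≠ σ v. Then the coloring σ' of the resolved network, giving v₁, v₂, x_v the
color σ v and agreeing with σ elsewhere, satisfies (C1) and (C2). -/
theorem stmt5 {V : Type} [Fintype V] [DecidableEq V] (N : Net V) (m : ℕ)
    (hm : 2 ≤ m) (hN : N.IsMNetwork m) (σ : V → Fin m)
    (hsurj : Function.Surjective σ) (h1 : N.C1 σ) (h2 : N.C2 σ)
    (v c p : V) (hv : N.IsRetic v) (hdeg : 3 ≤ N.inDeg v)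
    (hc : N.children v = {c}) (hp : p ∈ N.parents v) (hpv : σ p ≠ σ v) :
    (N.resolve p v c).C1 (Sum.elim σ (fun _ => σ v)) ∧
    (N.resolve p v c).C2 (Sum.elim σ (fun _ => σ v)) := by
  classical
  obtain ⟨⟨hacyc, -⟩, -⟩ := hN
  have hvc : (v, c) ∈ N.arcs := by
    have : c ∈ N.children v := by rw [hc]; simp
    simpa [Net.children] using this
  have hpvarc : (p, v) ∈ N.arcs := by simpa [Net.parents] using hp
  have hvc' : v ≠ c := by
    rintro rfl; exact hacyc v (Relation.TransGen.single hvc)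
  have hpv' : p ≠ v := by
    rintro rfl; exact hacyc p (Relation.TransGen.single hpvarc)
  have hpc : p ≠ c := by
    rintro rfl
    exact hacyc v (Relation.TransGen.head hvc (Relation.TransGen.single hpvarc))
  have hvnl : ¬ N.IsLeaf v := by
    simp [Net.IsLeaf, Net.outDeg, hc]
  have hσc : σ c = σ v := by
    obtain ⟨u, hu, hσ⟩ := h2 v hvnl
    rw [hc] at hu; simp at hu; subst hu; exact hσ
  have hvnr : ¬ N.IsRoot v := by
    rw [Net.IsRoot]; omega
  obtain ⟨q, ⟨hqp, hqσ⟩, hquniq⟩ := h1 v hvnr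
  have hqne : q ≠ p := by rintro rfl; exact hpv hqσ
  have hcnr : ¬ N.IsRoot c := by
    rw [Net.IsRoot, Net.inDeg]
    exact Finset.card_ne_zero_of_mem (by simp [Net.parents, hvc] : v ∈ N.parents c)
  obtain ⟨u0, ⟨hu0p, hu0σ⟩, hu0uniq⟩ := h1 c hcnr
  have hcpar : ∀ u, u ∈ N.parents c → σ u = σ c → u = v := by
    intro u h hs
    exact (hu0uniq u ⟨h, hs⟩).trans ((hu0uniq v ⟨by simp [Net.parents, hvc], hσc.symm⟩).symm)
  have harc : ∀ x y : V ⊕ Fin 3, ((x, y) ∈ (N.resolve p v c).arcs) ↔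
      ((∃ a b, (a, b) ∈ N.arcs ∧ ¬(a = p ∧ b = v) ∧ ¬(a = v ∧ b = c) ∧
        x = Sum.inl a ∧ y = Sum.inl b) ∨
       (x = Sum.inl v ∧ y = Sum.inr 0) ∨ (x = Sum.inr 0 ∧ y = Sum.inr 1) ∨
       (x = Sum.inr 1 ∧ y = Sum.inl c) ∨ (x = Sum.inr 0 ∧ y = Sum.inr 2) ∨
       (x = Sum.inl p ∧ y = Sum.inr 1)) := by
    intro x y
    simp only [Net.resolve, Finset.mem_union, Finset.mem_image, Finset.mem_insert,
      Finset.mem_singleton, Prod.ext_iff]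
    constructor
    · rintro (⟨⟨a, b⟩, hmem, rfl, rfl⟩ | h)
      · rw [Finset.mem_erase, Finset.mem_erase] at hmem
        obtain ⟨hne2, hne1, hmem⟩ := hmem
        refine Or.inl ⟨a, b, hmem, fun ⟨e1, e2⟩ => hne1 (by simp [e1, e2]),
          fun ⟨e1, e2⟩ => hne2 (by simp [e1, e2]), rfl, rfl⟩
      · tauto
    · rintro (⟨a, b, hmem, h4, h5, rfl, rfl⟩ | h)
      · refine Or.inl ⟨(a, b), ?_, rfl, rfl⟩
        rw [Finset.mem_erase, Finset.mem_erase]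
        exact ⟨fun he => h5 ⟨(Prod.ext_iff.mp he).1, (Prod.ext_iff.mp he).2⟩,
          fun he => h4 ⟨(Prod.ext_iff.mp he).1, (Prod.ext_iff.mp he).2⟩, hmem⟩
      · tauto
  have hparN' : ∀ (u y : V ⊕ Fin 3), u ∈ (N.resolve p v c).parents y ↔
      (u, y) ∈ (N.resolve p v c).arcs := by
    intro u y; simp [Net.parents]
  have hchN' : ∀ (u y : V ⊕ Fin 3), u ∈ (N.resolve p v c).children y ↔
      (y, u) ∈ (N.resolve p v c).arcs := by
    intro u y; simp [Net.children]
  constructor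
  · -- C1
    intro y hy
    have hroot : ∃ u, (u, y) ∈ (N.resolve p v c).arcs := by
      rw [Net.IsRoot, Net.inDeg] at hy
      obtain ⟨u, hu⟩ := Finset.card_ne_zero.mp hy
      exact ⟨u, (hparN' u y).mp hu⟩
    rcases y with w | i
    · by_cases hwv : w = v
      · subst hwv
        refine ⟨Sum.inl q, ⟨?_, hqσ⟩, ?_⟩
        · rw [hparN', harc]
          exact Or.inl ⟨q, w, by simpa [Net.parents] using hqp,
            fun ⟨e1, _⟩ => hqne e1, fun ⟨_, e2⟩ => hvc' e2, rfl, rfl⟩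
        · rintro z ⟨hz, hzσ⟩
          rw [hparN', harc] at hz
          obtain ⟨a, b, hab, h4, h5, rfl, hb⟩ | ⟨-, hb⟩ | ⟨-, hb⟩ | ⟨-, hb⟩ |
            ⟨-, hb⟩ | ⟨-, hb⟩ := hz
          · obtain rfl := Sum.inl.inj hb
            exact congrArg Sum.inl (hquniq a ⟨by simp [Net.parents, hab], hzσ⟩)
          · cases hb
          · cases hb
          · exact absurd (Sum.inl.inj hb) hvc'
          · cases hb
          · cases hb
      · by_cases hwc : w = c
        · subst hwc
          refine ⟨Sum.inr 1, ⟨?_, hσc.symm⟩, ?_⟩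
          · rw [hparN', harc]
            exact Or.inr (Or.inr (Or.inr (Or.inl ⟨rfl, rfl⟩)))
          · rintro z ⟨hz, hzσ⟩
            rw [hparN', harc] at hz
            obtain ⟨a, b, hab, h4, h5, rfl, hb⟩ | ⟨-, hb⟩ | ⟨-, hb⟩ | ⟨rfl, -⟩ |
              ⟨-, hb⟩ | ⟨-, hb⟩ := hz
            · obtain rfl := Sum.inl.inj hb
              exact (h5 ⟨hcpar a (by simp [Net.parents, hab]) hzσ, rfl⟩).elim
            · cases hb
            · cases hb
            · rfl
            · cases hb
            · cases hb
        · obtain ⟨u, hu⟩ := hroot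
          rw [harc] at hu
          have hwnr : ¬ N.IsRoot w := by
            obtain ⟨a, b, hab, -, -, -, hb⟩ | ⟨-, hb⟩ | ⟨-, hb⟩ | ⟨-, hb⟩ |
              ⟨-, hb⟩ | ⟨-, hb⟩ := hu
            · obtain rfl := Sum.inl.inj hb
              rw [Net.IsRoot, Net.inDeg]
              exact Finset.card_ne_zero_of_mem (by simp [Net.parents, hab] : a ∈ N.parents w)
            · cases hb
            · cases hb
            · exact absurd (Sum.inl.inj hb) hwc
            · cases hb
            · cases hb
          obtain ⟨u1, ⟨hu1p, hu1σ⟩, hu1u⟩ := h1 w hwnr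
          refine ⟨Sum.inl u1, ⟨?_, hu1σ⟩, ?_⟩
          · rw [hparN', harc]
            exact Or.inl ⟨u1, w, by simpa [Net.parents] using hu1p,
              fun ⟨_, e2⟩ => hwv e2, fun ⟨_, e2⟩ => hwc e2, rfl, rfl⟩
          · rintro z ⟨hz, hzσ⟩
            rw [hparN', harc] at hz
            obtain ⟨a, b, hab, h4, h5, rfl, hb⟩ | ⟨-, hb⟩ | ⟨-, hb⟩ | ⟨-, hb⟩ |
              ⟨-, hb⟩ | ⟨-, hb⟩ := hz
            · obtain rfl := Sum.inl.inj hb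
              exact congrArg Sum.inl (hu1u a ⟨by simp [Net.parents, hab], hzσ⟩)
            · cases hb
            · cases hb
            · exact absurd (Sum.inl.inj hb) hwc
            · cases hb
            · cases hb
    · fin_cases i
      · refine ⟨Sum.inl v, ⟨?_, rfl⟩, ?_⟩
        · rw [hparN', harc]
          exact Or.inr (Or.inl ⟨rfl, rfl⟩)
        · rintro z ⟨hz, -⟩
          rw [hparN', harc] at hz
          obtain ⟨a, b, -, -, -, -, hb⟩ | ⟨rfl, -⟩ | ⟨-, hb⟩ | ⟨-, hb⟩ |
            ⟨-, hb⟩ | ⟨-, hb⟩ := hz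
          · cases hb
          · rfl
          · exact absurd (Sum.inr.inj hb) (by decide)
          · cases hb
          · exact absurd (Sum.inr.inj hb) (by decide)
          · exact absurd (Sum.inr.inj hb) (by decide)
      · refine ⟨Sum.inr 0, ⟨?_, rfl⟩, ?_⟩
        · rw [hparN', harc]
          exact Or.inr (Or.inr (Or.inl ⟨rfl, rfl⟩))
        · rintro z ⟨hz, hzσ⟩
          rw [hparN', harc] at hz
          obtain ⟨a, b, -, -, -, -, hb⟩ | ⟨-, hb⟩ | ⟨rfl, -⟩ | ⟨-, hb⟩ |
            ⟨-, hb⟩ | ⟨rfl, -⟩ := hz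
          · cases hb
          · exact absurd (Sum.inr.inj hb) (by decide)
          · rfl
          · cases hb
          · exact absurd (Sum.inr.inj hb) (by decide)
          · exact absurd hzσ hpv
      · refine ⟨Sum.inr 0, ⟨?_, rfl⟩, ?_⟩
        · rw [hparN', harc]
          exact Or.inr (Or.inr (Or.inr (Or.inr (Or.inl ⟨rfl, rfl⟩))))
        · rintro z ⟨hz, -⟩
          rw [hparN', harc] at hz
          obtain ⟨a, b, -, -, -, -, hb⟩ | ⟨-, hb⟩ | ⟨-, hb⟩ | ⟨-, hb⟩ |
            ⟨rfl, -⟩ | ⟨-, hb⟩ := hz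
          · cases hb
          · exact absurd (Sum.inr.inj hb) (by decide)
          · exact absurd (Sum.inr.inj hb) (by decide)
          · cases hb
          · rfl
          · exact absurd (Sum.inr.inj hb) (by decide)
  · -- C2
    intro y hy
    have hleaf : ∃ u, (y, u) ∈ (N.resolve p v c).arcs := by
      rw [Net.IsLeaf, Net.outDeg] at hy
      obtain ⟨u, hu⟩ := Finset.card_ne_zero.mp hy
      exact ⟨u, (hchN' u y).mp hu⟩
    rcases y with w | i
    · by_cases hwv : w = v
      · subst hwv
        refine ⟨Sum.inr 0, ?_, rfl⟩
        rw [hchN', harc]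
        exact Or.inr (Or.inl ⟨rfl, rfl⟩)
      · by_cases hwp : w = p
        · subst hwp
          have hwnl : ¬ N.IsLeaf w := by
            rw [Net.IsLeaf, Net.outDeg]
            exact Finset.card_ne_zero_of_mem
              (by simp [Net.children, hpvarc] : v ∈ N.children w)
          obtain ⟨u1, hu1c, hu1σ⟩ := h2 w hwnl
          have hu1v : u1 ≠ v := by rintro rfl; exact hpv hu1σ.symm
          refine ⟨Sum.inl u1, ?_, hu1σ⟩
          rw [hchN', harc]
          exact Or.inl ⟨w, u1, by simpa [Net.children] using hu1c,
            fun ⟨_, e2⟩ => hu1v e2, fun ⟨e1, _⟩ => hwv e1, rfl, rfl⟩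
        · obtain ⟨u, hu⟩ := hleaf
          rw [harc] at hu
          have hwnl : ¬ N.IsLeaf w := by
            obtain ⟨a, b, hab, -, -, ha, -⟩ | ⟨ha, -⟩ | ⟨ha, -⟩ | ⟨ha, -⟩ |
              ⟨ha, -⟩ | ⟨ha, -⟩ := hu
            · obtain rfl := Sum.inl.inj ha
              rw [Net.IsLeaf, Net.outDeg]
              exact Finset.card_ne_zero_of_mem (by simp [Net.children, hab] : b ∈ N.children w)
            · exact absurd (Sum.inl.inj ha) hwv
            · cases ha
            · cases ha
            · cases ha
            · exact absurd (Sum.inl.inj ha) hwp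
          obtain ⟨u1, hu1c, hu1σ⟩ := h2 w hwnl
          refine ⟨Sum.inl u1, ?_, hu1σ⟩
          rw [hchN', harc]
          exact Or.inl ⟨w, u1, by simpa [Net.children] using hu1c,
            fun ⟨e1, _⟩ => hwp e1, fun ⟨e1, _⟩ => hwv e1, rfl, rfl⟩
    · fin_cases i
      · refine ⟨Sum.inr 1, ?_, rfl⟩
        rw [hchN', harc]
        exact Or.inr (Or.inr (Or.inl ⟨rfl, rfl⟩))
      · refine ⟨Sum.inl c, ?_, hσc⟩
        rw [hchN', harc]
        exact Or.inr (Or.inr (Or.inr (Or.inl ⟨rfl, rfl⟩)))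
      · exfalso
        obtain ⟨u, hu⟩ := hleaf
        rw [harc] at hu
        obtain ⟨a, b, -, -, -, ha, -⟩ | ⟨ha, -⟩ | ⟨ha, -⟩ | ⟨ha, -⟩ |
          ⟨ha, -⟩ | ⟨ha, -⟩ := hu
        · cases ha
        · cases ha
        · exact absurd (Sum.inr.inj ha) (by decide)
        · exact absurd (Sum.inr.inj ha) (by decide)
        · exact absurd (Sum.inr.inj ha) (by decide)
        · cases ha
end

section
/- Let N be an m-network, v a vertex of N, and let the resolution operation at a reticulation v of indegree ≥ 3 with chosen parent p be: add vertices v1, v2, x_v; remove arcs (p,v) and (v,c) where c is the unique child of v; add arcs (v,v1), (v1,v2), (v2,c), (v1,x_v), (p,v2). Then in the resulting graph N': the indegree of v is one less than in N; v1 is a tree-vertex of outdegree 2; v2 is a reticulation of indegree 2; x_v is a new leaf; N' is an m-network; and every reticulation of N' other than v and v2 is a reticulation of N with the same indegree. -/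
open Finset

namespace FB.Net
set_option linter.unusedSectionVars false

variable {V : Type} [Fintype V] [DecidableEq V] {N : Net V} {p v c : V}

lemma mem_resolve {a b : V ⊕ Fin 3} :
    (a, b) ∈ (N.resolve p v c).arcs ↔
      (∃ x y : V, a = Sum.inl x ∧ b = Sum.inl y ∧ (x,y) ∈ N.arcs ∧ ¬(x = p ∧ y = v) ∧ ¬(x = v ∧ y = c)) ∨
      (a = Sum.inl v ∧ b = Sum.inr 0) ∨ (a = Sum.inr 0 ∧ b = Sum.inr 1) ∨
      (a = Sum.inr 1 ∧ b = Sum.inl c) ∨ (a = Sum.inr 0 ∧ b = Sum.inr 2) ∨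
      (a = Sum.inl p ∧ b = Sum.inr 1) := by
  simp only [resolve, Finset.mem_union, Finset.mem_image, Finset.mem_erase, Finset.mem_insert,
    Finset.mem_singleton, Prod.ext_iff, Prod.mk.injEq, ne_eq]
  constructor
  · rintro (⟨⟨x,y⟩, ⟨h2, h1, h0⟩, rfl, rfl⟩ | h)
    · exact Or.inl ⟨x, y, rfl, rfl, h0, fun ⟨hx,hy⟩ => h1 (by simp [hx, hy]),
        fun ⟨hx,hy⟩ => h2 (by simp [hx,hy])⟩
    · tauto
  · rintro (⟨x, y, rfl, rfl, h0, h1, h2⟩ | h)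
    · exact Or.inl ⟨(x,y), ⟨fun ⟨hx,hy⟩ => h2 ⟨hx,hy⟩, fun ⟨hx,hy⟩ => h1 ⟨hx,hy⟩, h0⟩, rfl, rfl⟩
    · tauto

lemma mem_parents_iff {u w : V} : u ∈ N.parents w ↔ (u, w) ∈ N.arcs := by
  simp [parents]

lemma mem_children_iff {u w : V} : u ∈ N.children w ↔ (w, u) ∈ N.arcs := by
  simp [children]

lemma rparents (w : V ⊕ Fin 3) (x : V ⊕ Fin 3) :
    x ∈ (N.resolve p v c).parents w ↔ (x, w) ∈ (N.resolve p v c).arcs := by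
  simp [parents]

lemma rchildren (w : V ⊕ Fin 3) (x : V ⊕ Fin 3) :
    x ∈ (N.resolve p v c).children w ↔ (w, x) ∈ (N.resolve p v c).arcs := by
  simp [children]

lemma parents_inl_v (hvcne : v ≠ c) :
    (N.resolve p v c).parents (Sum.inl v) = ((N.parents v).erase p).image Sum.inl := by
  ext x
  simp only [rparents, mem_resolve, Finset.mem_image, Finset.mem_erase, mem_parents_iff]
  constructor
  · rintro (⟨a, b, rfl, hb, h0, h1, h2⟩ | h)
    · injection hb with hb; subst hb
      exact ⟨a, ⟨fun hap => h1 ⟨hap, rfl⟩, h0⟩, rfl⟩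
    · exfalso; simp_all
  · rintro ⟨a, ⟨hap, ha⟩, rfl⟩
    exact Or.inl ⟨a, v, rfl, rfl, ha, fun ⟨h1, _⟩ => hap h1, fun ⟨h1, h2⟩ => hvcne (h1 ▸ h2)⟩

lemma children_inl_v (hpvne : p ≠ v) (hvout : N.children v = {c}) :
    (N.resolve p v c).children (Sum.inl v) = {Sum.inr 0} := by
  ext x
  simp only [rchildren, mem_resolve, Finset.mem_singleton]
  constructor
  · rintro (⟨a, b, ha, rfl, h0, h1, h2⟩ | h)
    · injection ha with ha; subst ha
      have : b ∈ N.children v := mem_children_iff.mpr h0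
      rw [hvout, Finset.mem_singleton] at this
      exact absurd ⟨rfl, this⟩ h2
    · simp_all <;> tauto
  · rintro rfl; tauto

lemma parents_inr0 : (N.resolve p v c).parents (Sum.inr 0) = {Sum.inl v} := by
  ext x
  simp only [rparents, mem_resolve, Finset.mem_singleton]
  constructor
  · rintro (⟨a, b, _, hb, _⟩ | h)
    · exact absurd hb (by simp)
    · simp_all <;> tauto
  · rintro rfl; tauto

lemma children_inr0 : (N.resolve p v c).children (Sum.inr 0) = {Sum.inr 1, Sum.inr 2} := by
  ext x
  simp only [rchildren, mem_resolve, Finset.mem_insert, Finset.mem_singleton]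
  constructor
  · rintro (⟨a, b, ha, _⟩ | h)
    · exact absurd ha (by simp)
    · simp_all <;> tauto
  · rintro (rfl | rfl) <;> tauto

lemma parents_inr1 : (N.resolve p v c).parents (Sum.inr 1) = {Sum.inr 0, Sum.inl p} := by
  ext x
  simp only [rparents, mem_resolve, Finset.mem_insert, Finset.mem_singleton]
  constructor
  · rintro (⟨a, b, _, hb, _⟩ | h)
    · exact absurd hb (by simp)
    · simp_all <;> tauto
  · rintro (rfl | rfl) <;> tauto

lemma children_inr1 : (N.resolve p v c).children (Sum.inr 1) = {Sum.inl c} := by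
  ext x
  simp only [rchildren, mem_resolve, Finset.mem_singleton]
  constructor
  · rintro (⟨a, b, ha, _⟩ | h)
    · exact absurd ha (by simp)
    · simp_all <;> tauto
  · rintro rfl; tauto

lemma parents_inr2 : (N.resolve p v c).parents (Sum.inr 2) = {Sum.inr 0} := by
  ext x
  simp only [rparents, mem_resolve, Finset.mem_singleton]
  constructor
  · rintro (⟨a, b, _, hb, _⟩ | h)
    · exact absurd hb (by simp)
    · simp_all <;> tauto
  · rintro rfl; tauto

lemma children_inr2 : (N.resolve p v c).children (Sum.inr 2) = ∅ := by
  ext x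
  simp only [rchildren, mem_resolve, Finset.notMem_empty, iff_false]
  rintro (⟨a, b, ha, _⟩ | h)
  · exact absurd ha (by simp)
  · simp_all

lemma parents_inl_c (hvcne : v ≠ c) :
    (N.resolve p v c).parents (Sum.inl c) =
      (((N.parents c).erase v).image Sum.inl) ∪ {Sum.inr 1} := by
  ext x
  simp only [rparents, mem_resolve, Finset.mem_union, Finset.mem_image, Finset.mem_erase,
    Finset.mem_singleton, mem_parents_iff]
  constructor
  · rintro (⟨a, b, rfl, hb, h0, h1, h2⟩ | h)
    · injection hb with hb; subst hb
      exact Or.inl ⟨a, ⟨fun hav => h2 ⟨hav, rfl⟩, h0⟩, rfl⟩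
    · simp_all <;> tauto
  · rintro (⟨a, ⟨hav, ha⟩, rfl⟩ | rfl)
    · exact Or.inl ⟨a, c, rfl, rfl, ha, fun ⟨_, h2⟩ => hvcne h2.symm, fun ⟨h1, _⟩ => hav h1⟩
    · tauto

lemma children_inl_p (hpvne : p ≠ v) :
    (N.resolve p v c).children (Sum.inl p) =
      (((N.children p).erase v).image Sum.inl) ∪ {Sum.inr 1} := by
  ext x
  simp only [rchildren, mem_resolve, Finset.mem_union, Finset.mem_image, Finset.mem_erase,
    Finset.mem_singleton, mem_children_iff]
  constructor
  · rintro (⟨a, b, ha, rfl, h0, h1, h2⟩ | h)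
    · injection ha with ha; subst ha
      exact Or.inl ⟨b, ⟨fun hbv => h1 ⟨rfl, hbv⟩, h0⟩, rfl⟩
    · simp_all <;> tauto
  · rintro (⟨b, ⟨hbv, hb⟩, rfl⟩ | rfl)
    · exact Or.inl ⟨p, b, rfl, rfl, hb, fun ⟨_, h2⟩ => hbv h2, fun ⟨h1, _⟩ => hpvne h1⟩
    · tauto

lemma parents_inl_other {u : V} (huv : u ≠ v) (huc : u ≠ c) :
    (N.resolve p v c).parents (Sum.inl u) = (N.parents u).image Sum.inl := by
  ext x
  simp only [rparents, mem_resolve, Finset.mem_image, mem_parents_iff]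
  constructor
  · rintro (⟨a, b, rfl, hb, h0, _⟩ | h)
    · injection hb with hb; subst hb; exact ⟨a, h0, rfl⟩
    · exfalso; simp_all
  · rintro ⟨a, ha, rfl⟩
    exact Or.inl ⟨a, u, rfl, rfl, ha, fun ⟨_, h2⟩ => huv h2, fun ⟨_, h2⟩ => huc h2⟩

lemma children_inl_other {u : V} (huv : u ≠ v) (hup : u ≠ p) :
    (N.resolve p v c).children (Sum.inl u) = (N.children u).image Sum.inl := by
  ext x
  simp only [rchildren, mem_resolve, Finset.mem_image, mem_children_iff]
  constructor
  · rintro (⟨a, b, ha, rfl, h0, _⟩ | h)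
    · injection ha with ha; subst ha; exact ⟨b, h0, rfl⟩
    · exfalso; simp_all
  · rintro ⟨b, hb, rfl⟩
    exact Or.inl ⟨u, b, rfl, rfl, hb, fun ⟨h1, _⟩ => hup h1, fun ⟨h1, _⟩ => huv h1⟩

lemma card_image_inl (s : Finset V) : (s.image (Sum.inl : V → V ⊕ Fin 3)).card = s.card :=
  Finset.card_image_of_injective _ Sum.inl_injective

lemma inDeg_inl_v (hvcne : v ≠ c) (hpmem : p ∈ N.parents v) :
    (N.resolve p v c).inDeg (Sum.inl v) = N.inDeg v - 1 := by
  rw [inDeg, parents_inl_v hvcne, card_image_inl, Finset.card_erase_of_mem hpmem, inDeg]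

lemma outDeg_inl_v (hpvne : p ≠ v) (hvout : N.children v = {c}) :
    (N.resolve p v c).outDeg (Sum.inl v) = 1 := by
  rw [outDeg, children_inl_v hpvne hvout, Finset.card_singleton]

lemma inDeg_inr0 : (N.resolve p v c).inDeg (Sum.inr 0) = 1 := by
  rw [inDeg, parents_inr0, Finset.card_singleton]

lemma outDeg_inr0 : (N.resolve p v c).outDeg (Sum.inr 0) = 2 := by
  rw [outDeg, children_inr0, Finset.card_insert_of_notMem (by simp), Finset.card_singleton]

lemma inDeg_inr1 : (N.resolve p v c).inDeg (Sum.inr 1) = 2 := by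
  rw [inDeg, parents_inr1, Finset.card_insert_of_notMem (by simp), Finset.card_singleton]

lemma outDeg_inr1 : (N.resolve p v c).outDeg (Sum.inr 1) = 1 := by
  rw [outDeg, children_inr1, Finset.card_singleton]

lemma inDeg_inr2 : (N.resolve p v c).inDeg (Sum.inr 2) = 1 := by
  rw [inDeg, parents_inr2, Finset.card_singleton]

lemma outDeg_inr2 : (N.resolve p v c).outDeg (Sum.inr 2) = 0 := by
  rw [outDeg, children_inr2, Finset.card_empty]

lemma inDeg_inl (hvc : (v, c) ∈ N.arcs) (hvcne : v ≠ c) {u : V} (huv : u ≠ v) :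
    (N.resolve p v c).inDeg (Sum.inl u) = N.inDeg u := by
  by_cases huc : u = c
  · rw [huc, inDeg, parents_inl_c hvcne,
      Finset.card_union_of_disjoint (by simp), card_image_inl,
      Finset.card_erase_of_mem (mem_parents_iff.mpr hvc), Finset.card_singleton, inDeg]
    have : 1 ≤ (N.parents c).card := Finset.card_pos.mpr ⟨v, mem_parents_iff.mpr hvc⟩
    omega
  · rw [inDeg, parents_inl_other huv huc, card_image_inl, inDeg]

lemma outDeg_inl (hpv : (p, v) ∈ N.arcs) (hpvne : p ≠ v) {u : V} (huv : u ≠ v) :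
    (N.resolve p v c).outDeg (Sum.inl u) = N.outDeg u := by
  by_cases hup : u = p
  · rw [hup, outDeg, children_inl_p hpvne,
      Finset.card_union_of_disjoint (by simp), card_image_inl,
      Finset.card_erase_of_mem (mem_children_iff.mpr hpv), Finset.card_singleton, outDeg]
    have : 1 ≤ (N.children p).card := Finset.card_pos.mpr ⟨v, mem_children_iff.mpr hpv⟩
    omega
  · rw [outDeg, children_inl_other huv hup, card_image_inl, outDeg]

/-- collapse map used to prove acyclicity -/
def rphi (v : V) : V ⊕ Fin 3 → V := Sum.elim id fun _ => v
/-- local rank used to prove acyclicity -/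
def rpsi : V ⊕ Fin 3 → ℕ := Sum.elim (fun _ => 0) fun i => (i : ℕ) + 1

lemma resolve_acyclic (hN : N.Acyclic) (hpv : (p, v) ∈ N.arcs) (hvc : (v, c) ∈ N.arcs) :
    (N.resolve p v c).Acyclic := by
  have step : ∀ a b, (N.resolve p v c).Arc a b →
      Relation.TransGen N.Arc (rphi v a) (rphi v b) ∨
        (rphi v a = rphi v b ∧ rpsi a < rpsi b) := by
    intro a b hab
    rcases mem_resolve.mp hab with ⟨x, y, rfl, rfl, h0, _, _⟩ |
      ⟨rfl, rfl⟩ | ⟨rfl, rfl⟩ | ⟨rfl, rfl⟩ | ⟨rfl, rfl⟩ | ⟨rfl, rfl⟩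
    · exact Or.inl (Relation.TransGen.single h0)
    · exact Or.inr ⟨rfl, by norm_num [rpsi]⟩
    · exact Or.inr ⟨rfl, by norm_num [rpsi]⟩
    · exact Or.inl (Relation.TransGen.single hvc)
    · exact Or.inr ⟨rfl, by norm_num [rpsi]⟩
    · exact Or.inl (Relation.TransGen.single hpv)
  have key : ∀ a b, Relation.TransGen (N.resolve p v c).Arc a b →
      Relation.TransGen N.Arc (rphi v a) (rphi v b) ∨
        (rphi v a = rphi v b ∧ rpsi a < rpsi b) := by
    intro a b h
    induction h with
    | single h => exact step _ _ h
    | tail _ h ih =>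
      rcases ih with ht | ⟨he, hl⟩ <;> rcases step _ _ h with ht' | ⟨he', hl'⟩
      · exact Or.inl (ht.trans ht')
      · exact Or.inl (he' ▸ ht)
      · exact Or.inl (he ▸ ht')
      · exact Or.inr ⟨he.trans he', hl.trans hl'⟩
  intro w hw
  rcases key w w hw with ht | ⟨_, hl⟩
  · exact hN _ ht
  · exact lt_irrefl _ hl

lemma resolve_connected (hconn : N.Connected) (hpv : (p, v) ∈ N.arcs) (hvc : (v, c) ∈ N.arcs) :
    (N.resolve p v c).Connected := by
  set N' := N.resolve p v c with hN'
  set R := fun a b : V ⊕ Fin 3 => N'.Arc a b ∨ N'.Arc b a with hR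
  have hRsymm : Symmetric R := fun a b h => h.symm
  have hRTsymm : Symmetric (Relation.ReflTransGen R) := fun a b h => by
    induction h with
    | refl => exact Relation.ReflTransGen.refl
    | tail _ hbc ih => exact Relation.ReflTransGen.head (hRsymm hbc) ih
  have a1 : N'.Arc (Sum.inl v) (Sum.inr 0) := mem_resolve.mpr (by tauto)
  have a2 : N'.Arc (Sum.inr 0) (Sum.inr 1) := mem_resolve.mpr (by tauto)
  have a3 : N'.Arc (Sum.inr 1) (Sum.inl c) := mem_resolve.mpr (by tauto)
  have a4 : N'.Arc (Sum.inr 0) (Sum.inr 2) := mem_resolve.mpr (by tauto)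
  have a5 : N'.Arc (Sum.inl p) (Sum.inr 1) := mem_resolve.mpr (by tauto)
  have hlift1 : ∀ a b : V, N.Arc a b →
      Relation.ReflTransGen R (Sum.inl a) (Sum.inl b) := by
    intro a b hab
    by_cases h1 : a = p ∧ b = v
    · obtain ⟨rfl, rfl⟩ := h1
      exact (((Relation.ReflTransGen.single (show R (Sum.inl a) (Sum.inr 1) from Or.inl a5)).tail
        (show R (Sum.inr 1) (Sum.inr 0) from Or.inr a2)).tail
        (show R (Sum.inr 0) (Sum.inl b) from Or.inr a1))
    · by_cases h2 : a = v ∧ b = c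
      · obtain ⟨rfl, rfl⟩ := h2
        exact (((Relation.ReflTransGen.single (show R (Sum.inl a) (Sum.inr 0) from Or.inl a1)).tail
          (show R (Sum.inr 0) (Sum.inr 1) from Or.inl a2)).tail
          (show R (Sum.inr 1) (Sum.inl b) from Or.inl a3))
      · exact Relation.ReflTransGen.single
          (show R (Sum.inl a) (Sum.inl b) from
            Or.inl (mem_resolve.mpr (Or.inl ⟨a, b, rfl, rfl, hab, h1, h2⟩)))
  have hlift : ∀ a b : V, (N.Arc a b ∨ N.Arc b a) →
      Relation.ReflTransGen R (Sum.inl a) (Sum.inl b) := by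
    rintro a b (h | h)
    · exact hlift1 a b h
    · exact hRTsymm (hlift1 b a h)
  have hll : ∀ a b : V, Relation.ReflTransGen R (Sum.inl a) (Sum.inl b) := by
    intro a b
    have := hconn a b
    induction this with
    | refl => exact Relation.ReflTransGen.refl
    | tail _ h ih => exact ih.trans (hlift _ _ h)
  have hbase : ∀ x : V ⊕ Fin 3, ∃ u : V, Relation.ReflTransGen R x (Sum.inl u) := by
    rintro (u | i)
    · exact ⟨u, Relation.ReflTransGen.refl⟩
    · refine ⟨v, ?_⟩
      have h0 : Relation.ReflTransGen R (Sum.inr 0) (Sum.inl v) :=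
        Relation.ReflTransGen.single (show R (Sum.inr 0) (Sum.inl v) from Or.inr a1)
      fin_cases i
      · exact h0
      · exact (Relation.ReflTransGen.single (show R (Sum.inr 1) (Sum.inr 0) from Or.inr a2)).trans h0
      · exact (Relation.ReflTransGen.single (show R (Sum.inr 2) (Sum.inr 0) from Or.inr a4)).trans h0
  intro x y
  obtain ⟨ux, hx⟩ := hbase x
  obtain ⟨uy, hy⟩ := hbase y
  exact (hx.trans (hll ux uy)).trans (hRTsymm hy)

end FB.Net

open FB FB.Net in
/-- Properties of the resolution operation at a reticulation v of
indegree ≥ 3 with parent p and unique child c: in N' = resolve N p v c, the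
indegree of v drops by one; v₁ is a tree-vertex of outdegree 2; v₂ is a
reticulation of indegree 2; x_v is a leaf; N' is an m-network; and every
reticulation of N' other than v and v₂ is a reticulation of N of the same indegree. -/
theorem stmt17 {V : Type} [Fintype V] [DecidableEq V] (N : Net V) (m : ℕ)
    (hN : N.IsMNetwork m) (v c p : V) (hv : N.IsRetic v) (hdeg : 3 ≤ N.inDeg v)
    (hc : N.children v = {c}) (hp : p ∈ N.parents v) :
    (N.resolve p v c).inDeg (Sum.inl v) = N.inDeg v - 1 ∧
    (N.resolve p v c).IsTreeVertex (Sum.inr 0) ∧ (N.resolve p v c).outDeg (Sum.inr 0) = 2 ∧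
    (N.resolve p v c).IsRetic (Sum.inr 1) ∧ (N.resolve p v c).inDeg (Sum.inr 1) = 2 ∧
    (N.resolve p v c).IsLeaf (Sum.inr 2) ∧
    (N.resolve p v c).IsMNetwork m ∧
    (∀ w : V ⊕ Fin 3, w ≠ Sum.inl v → w ≠ Sum.inr 1 → (N.resolve p v c).IsRetic w →
      ∃ w₀ : V, w = Sum.inl w₀ ∧ N.IsRetic w₀ ∧
        (N.resolve p v c).inDeg w = N.inDeg w₀) := by
  obtain ⟨⟨hacyc, hconn, hleaf, hroot, hretic, h11⟩, hm⟩ := hN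
  have hvc : (v, c) ∈ N.arcs :=
    mem_children_iff.mp (by rw [hc]; exact Finset.mem_singleton_self c)
  have hpv : (p, v) ∈ N.arcs := mem_parents_iff.mp hp
  have hvcne : v ≠ c := by rintro rfl; exact hacyc v (Relation.TransGen.single hvc)
  have hpvne : p ≠ v := by rintro rfl; exact hacyc p (Relation.TransGen.single hpv)
  have hdv : (N.resolve p v c).inDeg (Sum.inl v) = N.inDeg v - 1 := inDeg_inl_v hvcne hp
  have hodv : (N.resolve p v c).outDeg (Sum.inl v) = 1 := outDeg_inl_v hpvne hc
  have hnoutv : N.outDeg v = 1 := by rw [outDeg, hc, Finset.card_singleton]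
  have hroots : (N.resolve p v c).roots = N.roots.image Sum.inl := by
    ext w
    simp only [roots, Finset.mem_filter, Finset.mem_univ, true_and, Finset.mem_image]
    simp only [IsRoot]
    constructor
    · intro hw
      match w with
      | Sum.inl u =>
        by_cases huv : u = v
        · subst huv; rw [hdv] at hw; omega
        · rw [inDeg_inl hvc hvcne huv] at hw
          exact ⟨u, hw, rfl⟩
      | Sum.inr i =>
        exfalso
        fin_cases i <;> simp_all [inDeg_inr0, inDeg_inr1, inDeg_inr2]
    · rintro ⟨u, hu, rfl⟩
      have huv : u ≠ v := by
        rintro rfl; rw [hu] at hdeg; omega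
      rw [inDeg_inl hvc hvcne huv]; exact hu
  refine ⟨hdv, ⟨?_, by rw [inDeg_inr0]⟩, outDeg_inr0, ?_, inDeg_inr1, ?_, ⟨⟨?_, ?_, ?_, ?_, ?_, ?_⟩, ?_⟩, ?_⟩
  · simp only [IsLeaf, outDeg_inr0]; omega
  · exact le_of_eq (inDeg_inr1).symm
  · simp only [IsLeaf, outDeg_inr2]
  · exact resolve_acyclic hacyc hpv hvc
  · exact resolve_connected hconn hpv hvc
  · -- leaves have indegree 1
    rintro (u | i) hw
    · simp only [IsLeaf] at hw
      have huv : u ≠ v := by rintro rfl; rw [hodv] at hw; omega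
      rw [outDeg_inl hpv hpvne huv] at hw
      rw [inDeg_inl hvc hvcne huv]
      exact hleaf u hw
    · simp only [IsLeaf] at hw
      fin_cases i <;> simp_all [outDeg_inr0, outDeg_inr1, inDeg_inr2]
  · -- roots have outdegree ≥ 2
    rintro (u | i) hw <;> simp only [IsRoot] at hw
    · have huv : u ≠ v := by rintro rfl; rw [hdv] at hw; omega
      rw [inDeg_inl hvc hvcne huv] at hw
      rw [outDeg_inl hpv hpvne huv]
      exact hroot u hw
    · exfalso; fin_cases i <;> simp_all [inDeg_inr0, inDeg_inr1, inDeg_inr2]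
  · -- reticulations have outdegree 1
    rintro (u | i) hw <;> simp only [IsRetic] at hw
    · by_cases huv : u = v
      · subst huv; exact hodv
      · rw [inDeg_inl hvc hvcne huv] at hw
        rw [outDeg_inl hpv hpvne huv]
        exact hretic u hw
    · fin_cases i <;> simp_all [inDeg_inr0, inDeg_inr2, outDeg_inr1]
  · -- no vertex with indegree 1 and outdegree 1
    rintro (u | i) ⟨h1, h2⟩
    · by_cases huv : u = v
      · subst huv; rw [hdv] at h1; omega
      · rw [inDeg_inl hvc hvcne huv] at h1
        rw [outDeg_inl hpv hpvne huv] at h2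
        exact h11 u ⟨h1, h2⟩
    · fin_cases i <;> simp_all [outDeg_inr0, inDeg_inr1, outDeg_inr2]
  · rw [hroots, card_image_inl, hm]
  · -- other reticulations
    rintro (u | i) hne1 hne2 hret
    · have huv : u ≠ v := fun h => hne1 (by rw [h])
      simp only [IsRetic] at hret
      rw [inDeg_inl hvc hvcne huv] at hret ⊢
      exact ⟨u, rfl, hret, rfl⟩
    · exfalso
      simp only [IsRetic] at hret
      fin_cases i <;> simp_all [inDeg_inr0, inDeg_inr2]
end
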